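/- Fix an integer d ≥ 2 and k ∈ (−π,π)^d. For ι ∈ {2, 3, …, d} define v⃗^{(−ι)} = (1 − e^{i k_ι})·(e^{i k_1}·e⃗_1 − e⃗_{−1}) − (1 − e^{i k_1})·(e^{i k_ι}·e⃗_ι − e⃗_{−ι}) ∈ ℂ^I. Then for every such ι and every k, A[k]·v⃗^{(−ι)} = v⃗^{(−ι)}; if moreover e^{i k_1} ≠ 1, the d−1 vectors v⃗^{(−2)}, …, v⃗^{(−d)} are linearly independent. In addition, for every k ∈ (−π,π)^d (including those with some e^{i k_j} = 1) the eigenvalue 1 of A[k] has geometric multiplicity at least d−1. -/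

import Mathlib

open scoped BigOperators
open Matrix

noncomputable section

/-- The index set `I = {-d, …, -1, 1, …, d}`. -/
def Idx (d : ℕ) : Finset ℤ := (Finset.Icc (-(d : ℤ)) d).erase 0

lemma mem_Idx {d : ℕ} {ι : ℤ} (h : ι ∈ Idx d) : ι ≠ 0 ∧ -(d : ℤ) ≤ ι ∧ ι ≤ d := by
  simpa [Idx, Finset.mem_erase, Finset.mem_Icc, and_assoc] using h

lemma mem_Idx' {d : ℕ} {ι : ℤ} (h1 : ι ≠ 0) (h2 : -(d : ℤ) ≤ ι) (h3 : ι ≤ d) :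
    ι ∈ Idx d := by
  simp [Idx, Finset.mem_erase, Finset.mem_Icc]; omega

/-- `k_ι = sign(ι) · k_{|ι|}` (with `|ι| ∈ {1,…,d}` re-indexed as `Fin d`). -/
def kc {d : ℕ} (k : Fin d → ℝ) (ι : Idx d) : ℝ :=
  (ι.1.sign : ℝ) * k ⟨ι.1.natAbs - 1, by
    obtain ⟨h1, h2, h3⟩ := mem_Idx ι.2; omega⟩

/-- The negation `-ι` as an element of the index set. -/
def negIdx {d : ℕ} (ι : Idx d) : Idx d :=
  ⟨-ι.1, by obtain ⟨h1, h2, h3⟩ := mem_Idx ι.2; exact mem_Idx' (by omega) (by omega) (by omega)⟩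

/-- The coordinate vector `e⃗_ι ∈ ℂ^I`. -/
def eVec {d : ℕ} (ι : Idx d) : Idx d → ℂ := fun κ => if κ = ι then 1 else 0

/-- The unit step `e_ι = sign(ι)·(basis vector |ι|)` in `ℤ^d`. -/
def stepVec {d : ℕ} (ι : Idx d) : Fin d → ℤ :=
  fun j => if (j : ℕ) = ι.1.natAbs - 1 then ι.1.sign else 0

/-- The all-ones matrix `C`. -/
def matC (d : ℕ) : Matrix (Idx d) (Idx d) ℂ := Matrix.of fun _ _ => 1

/-- The matrix `J` with `J_{ι,κ} = δ_{ι,-κ}`. -/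
def matJ (d : ℕ) : Matrix (Idx d) (Idx d) ℂ :=
  Matrix.of fun ι κ => if ι.1 = -κ.1 then 1 else 0

/-- The diagonal matrix `D[k]` with entries `e^{i k_ι}`. -/
def matD {d : ℕ} (k : Fin d → ℝ) : Matrix (Idx d) (Idx d) ℂ :=
  Matrix.diagonal fun ι => Complex.exp (Complex.I * (kc k ι : ℂ))

/-- The NBW transition matrix `A[k] = (C − J)·D[−k]`. -/
def matA {d : ℕ} (k : Fin d → ℝ) : Matrix (Idx d) (Idx d) ℂ :=
  (matC d - matJ d) * matD (-k)

/-- `ω` is an `n`-step nearest-neighbour non-backtracking walk on `ℤ^d`. -/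
def IsNBW (d n : ℕ) (ω : Fin (n + 1) → (Fin d → ℤ)) : Prop :=
  ω 0 = 0 ∧
  (∀ i : ℕ, ∀ hi : i < n,
    (∑ j, |ω ⟨i + 1, by omega⟩ j - ω ⟨i, by omega⟩ j|) = 1) ∧
  (∀ i : ℕ, ∀ hi : i + 2 ≤ n, ω ⟨i + 2, by omega⟩ ≠ ω ⟨i, by omega⟩)

/-- `b_n(x)`: the number of `n`-step NBWs ending at `x`. -/
def bc (d n : ℕ) (x : Fin d → ℤ) : ℕ :=
  Nat.card {ω : Fin (n + 1) → (Fin d → ℤ) // IsNBW d n ω ∧ ω (Fin.last n) = x}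

/-- `b_n^ι(x)`: the number of `n`-step NBWs ending at `x` whose first step is not `e_ι`. -/
def bcRes (d n : ℕ) (ι : Idx d) (x : Fin d → ℤ) : ℕ :=
  Nat.card {ω : Fin (n + 1) → (Fin d → ℤ) //
    IsNBW d n ω ∧ ω (Fin.last n) = x ∧ ∀ _ : 1 ≤ n, ω ⟨1, by omega⟩ ≠ stepVec ι}

/-- Fourier transform `f̂(k) = Σ_x f(x) e^{i k·x}` of a (finitely supported) `f : ℤ^d → ℕ`. -/
def fhat {d : ℕ} (f : (Fin d → ℤ) → ℕ) (k : Fin d → ℝ) : ℂ :=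
  ∑' x : Fin d → ℤ, (f x : ℂ) * Complex.exp (Complex.I * ∑ j, (k j : ℂ) * (x j : ℂ))

/-- `b̂_n(k)`. -/
def bhat (d n : ℕ) (k : Fin d → ℝ) : ℂ := fhat (bc d n) k

/-- `b⃗_n(k)`, the vector with entries `b̂_n^ι(k)`. -/
def bvec (d n : ℕ) (k : Fin d → ℝ) : Idx d → ℂ := fun ι => fhat (bcRes d n ι) k

/-- `D̂(k) = (1/d) Σ_j cos k_j`. -/
def Dhat {d : ℕ} (k : Fin d → ℝ) : ℝ := (1 / d) * ∑ j, Real.cos (k j)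


/-- The index `1 ∈ I` (for `d ≥ 1`). -/
def idxOne (d : ℕ) (hd : 1 ≤ d) : Idx d :=
  ⟨1, mem_Idx' (by omega) (by omega) (by omega)⟩

/-- The vector `v⃗^{(−ι)} = (1−e^{ik_ι})(e^{ik_1}e⃗_1 − e⃗_{−1}) − (1−e^{ik_1})(e^{ik_ι}e⃗_ι − e⃗_{−ι})`. -/
def vPlusOne {d : ℕ} (hd : 1 ≤ d) (k : Fin d → ℝ) (ι : Idx d) : Idx d → ℂ :=
  (1 - Complex.exp (Complex.I * (kc k ι : ℂ))) •
      (Complex.exp (Complex.I * (kc k (idxOne d hd) : ℂ)) • eVec (idxOne d hd) -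
        eVec (negIdx (idxOne d hd)))
    - (1 - Complex.exp (Complex.I * (kc k (idxOne d hd) : ℂ))) •
      (Complex.exp (Complex.I * (kc k ι : ℂ)) • eVec ι - eVec (negIdx ι))

/-!
Write `u⃗^{(ι)} = e^{ik_ι} e⃗_ι − e⃗_{−ι}`. Since `k_{−κ} = −k_κ`, one has
`(A[k] x)_κ = Σ_λ e^{−ik_λ} x_λ − e^{ik_κ} x_{−κ}`, and hence
`A[k] u⃗^{(ι)} = u⃗^{(ι)} + (1 − e^{ik_ι}) 𝟙`. So `Σ_j c_j u⃗^{(j)}` is fixed by `A[k]` as soon as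
`Σ_j c_j (1 − e^{ik_j}) = 0`, and `v⃗^{(−ι)} = (1 − e^{ik_ι}) u⃗^{(1)} − (1 − e^{ik_1}) u⃗^{(ι)}` is
such a combination. For positive `j, j'` the `(−j)`-th coordinate of `u⃗^{(j')}` is `−δ_{jj'}`, so
the `u⃗^{(j)}`, `j = 1, …, d`, are independent and the fixed space of `A[k]` contains an isomorphic
copy of a hyperplane of `ℂ^d`. Likewise the `(−ι)`-th coordinate of `v⃗^{(−ι')}` is
`δ_{ιι'} (1 − e^{ik_1})`.
-/

open Complex

lemma finrank_sub_one_le_finrank_ker {K V : Type*} [Field K] [AddCommGroup V] [Module K V]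
    [FiniteDimensional K V] (f : V →ₗ[K] K) :
    Module.finrank K V - 1 ≤ Module.finrank K (LinearMap.ker f) := by
  have hrange : Module.finrank K (LinearMap.range f) ≤ 1 :=
    (Submodule.finrank_le _).trans_eq (Module.finrank_self K)
  have := f.finrank_range_add_finrank_ker
  omega

section

variable {d : ℕ}

@[simp]
lemma negIdx_negIdx (ι : Idx d) : negIdx (negIdx ι) = ι :=
  Subtype.ext (neg_neg ι.1)

lemma negIdx_involutive : Function.Involutive (negIdx (d := d)) :=
  negIdx_negIdx

lemma negIdx_ne_self (ι : Idx d) : negIdx ι ≠ ι := fun h =>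
  (mem_Idx ι.2).1 (by have := congrArg Subtype.val h; simp only [negIdx] at this; omega)

lemma kc_neg (k : Fin d → ℝ) (ι : Idx d) : kc (-k) ι = -kc k ι := by
  simp [kc]

lemma kc_negIdx (k : Fin d → ℝ) (ι : Idx d) : kc k (negIdx ι) = -kc k ι := by
  simp only [kc, negIdx, Int.sign_neg, Int.natAbs_neg, Int.cast_neg, neg_mul]

lemma matA_mulVec_apply (k : Fin d → ℝ) (x : Idx d → ℂ) (κ : Idx d) :
    (matA k *ᵥ x) κ =
      ∑ l, cexp (-(I * kc k l)) * x l - cexp (I * kc k κ) * x (negIdx κ) := by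
  have hJ : ∀ l : Idx d, (if κ.1 = -l.1 then (1 : ℂ) else 0) = if l = negIdx κ then 1 else 0 :=
    fun l => by simp only [Subtype.ext_iff, negIdx]; congr 1; apply propext; omega
  simp only [matA, matD, Matrix.mul_diagonal, mulVec, dotProduct, matC, matJ, Matrix.sub_apply,
    of_apply, kc_neg, hJ, sub_mul, Finset.sum_sub_distrib, ite_mul, one_mul, zero_mul,
    Finset.sum_ite_eq', Finset.mem_univ, if_true, kc_negIdx]
  push_cast
  ring_nf

def uVec (k : Fin d → ℝ) (ι : Idx d) : Idx d → ℂ :=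
  cexp (I * kc k ι) • eVec ι - eVec (negIdx ι)

lemma sum_exp_neg_kc_mul_uVec (k : Fin d → ℝ) (ι : Idx d) :
    ∑ l, cexp (-(I * kc k l)) * uVec k ι l = 1 - cexp (I * kc k ι) := by
  simp only [uVec, eVec, Pi.sub_apply, Pi.smul_apply, smul_eq_mul, mul_ite, mul_one, mul_zero,
    mul_sub, Finset.sum_sub_distrib, Finset.sum_ite_eq', Finset.mem_univ, if_true, kc_negIdx]
  rw [← Complex.exp_add, neg_add_cancel, Complex.exp_zero, Complex.ofReal_neg, mul_neg, neg_neg]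

lemma exp_kc_mul_uVec_negIdx (k : Fin d → ℝ) (ι κ : Idx d) :
    cexp (I * kc k κ) * uVec k ι (negIdx κ) = -uVec k ι κ := by
  obtain rfl | rfl | ⟨h1, h2⟩ : κ = ι ∨ κ = negIdx ι ∨ (κ ≠ ι ∧ κ ≠ negIdx ι) := by tauto
  · simp [uVec, eVec, negIdx_ne_self, (negIdx_ne_self κ).symm]
  · simp [uVec, eVec, negIdx_ne_self, (negIdx_ne_self ι).symm, kc_negIdx, ← Complex.exp_add]
  · have h1' : negIdx κ ≠ negIdx ι := negIdx_involutive.injective.ne h1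
    have h2' : negIdx κ ≠ ι := by rintro rfl; simp at h2
    simp [uVec, eVec, h1, h2, h1', h2']

lemma matA_mulVec_uVec (k : Fin d → ℝ) (ι : Idx d) :
    matA k *ᵥ uVec k ι = (1 - cexp (I * kc k ι)) • (fun _ => 1) + uVec k ι := by
  funext κ
  rw [matA_mulVec_apply, sum_exp_neg_kc_mul_uVec, exp_kc_mul_uVec_negIdx]
  simp

lemma matA_mulVec_sum_smul_uVec {α : Type*} [Fintype α] (k : Fin d → ℝ) (ι : α → Idx d)
    (c : α → ℂ) :
    matA k *ᵥ ∑ a, c a • uVec k (ι a) =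
      (∑ a, c a * (1 - cexp (I * kc k (ι a)))) • (fun _ => 1) + ∑ a, c a • uVec k (ι a) := by
  simp only [mulVec_sum, mulVec_smul, matA_mulVec_uVec, smul_add, Finset.sum_add_distrib,
    smul_smul, Finset.sum_smul]

lemma uVec_apply_negIdx_of_pos (k : Fin d → ℝ) {ι κ : Idx d} (hι : 0 < ι.1) (hκ : 0 < κ.1) :
    uVec k ι (negIdx κ) = if ι = κ then -1 else 0 := by
  have hne : negIdx κ ≠ ι := fun h => by
    have := congrArg Subtype.val h; simp only [negIdx] at this; omega
  simp only [uVec, eVec, Pi.sub_apply, Pi.smul_apply, if_neg hne, smul_zero,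
    negIdx_involutive.injective.eq_iff, eq_comm (a := κ), zero_sub]
  split_ifs <;> simp

lemma linearIndependent_uVec_pos (k : Fin d → ℝ) :
    LinearIndependent ℂ (fun ι : {ι : Idx d // 0 < ι.1} => uVec k ι.1) := by
  rw [Fintype.linearIndependent_iff]
  intro g hg ι
  have h := congrFun hg (negIdx ι.1)
  simp only [Finset.sum_apply, Pi.smul_apply, smul_eq_mul, Pi.zero_apply] at h
  rw [Finset.sum_congr rfl fun ι' _ => by rw [uVec_apply_negIdx_of_pos k ι'.2 ι.2]] at h
  simpa [← Subtype.ext_iff] using h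

def posIdx (j : Fin d) : {ι : Idx d // 0 < ι.1} :=
  ⟨⟨j + 1, mem_Idx' (by omega) (by omega) (by omega)⟩, by simp only; omega⟩

lemma posIdx_injective : Function.Injective (posIdx (d := d)) := fun i j h => by
  have := congrArg (fun ι => ι.1.1) h; simp only [posIdx] at this; omega

lemma map_ker_le_eigenspace_one (k : Fin d → ℝ) :
    (LinearMap.ker (Fintype.linearCombination ℂ fun j => 1 - cexp (I * kc k (posIdx j).1))).map
        (Fintype.linearCombination ℂ fun j => uVec k (posIdx j).1) ≤
      Module.End.eigenspace (toLin' (matA k)) 1 := by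
  rintro _ ⟨c, hc, rfl⟩
  simp only [SetLike.mem_coe, LinearMap.mem_ker, Fintype.linearCombination_apply,
    smul_eq_mul] at hc
  simp only [Module.End.mem_eigenspace_iff, one_smul, toLin'_apply,
    Fintype.linearCombination_apply, matA_mulVec_sum_smul_uVec, hc, zero_smul, zero_add]

lemma sub_one_le_finrank_eigenspace_one (k : Fin d → ℝ) :
    d - 1 ≤ Module.finrank ℂ (Module.End.eigenspace (toLin' (matA k)) 1) := by
  have hφ :=
    ((linearIndependent_uVec_pos k).comp _ posIdx_injective).fintypeLinearCombination_injective
  calc d - 1 ≤ Module.finrank ℂ (LinearMap.ker _) := by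
        simpa using finrank_sub_one_le_finrank_ker
          (Fintype.linearCombination ℂ fun j => 1 - cexp (I * kc k (posIdx j).1))
    _ = Module.finrank ℂ (Submodule.map _ _) :=
        (Submodule.equivMapOfInjective _ hφ _).finrank_eq
    _ ≤ _ := Submodule.finrank_mono (map_ker_le_eigenspace_one k)

lemma vPlusOne_eq (hd : 1 ≤ d) (k : Fin d → ℝ) (ι : Idx d) :
    vPlusOne hd k ι = (1 - cexp (I * kc k ι)) • uVec k (idxOne d hd) -
      (1 - cexp (I * kc k (idxOne d hd))) • uVec k ι :=
  rfl

lemma matA_mulVec_vPlusOne (hd : 1 ≤ d) (k : Fin d → ℝ) (ι : Idx d) :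
    matA k *ᵥ vPlusOne hd k ι = vPlusOne hd k ι := by
  rw [vPlusOne_eq, mulVec_sub, mulVec_smul, mulVec_smul, matA_mulVec_uVec, matA_mulVec_uVec]
  module

lemma vPlusOne_apply_negIdx (hd : 1 ≤ d) (k : Fin d → ℝ) {ι κ : Idx d}
    (hι : 2 ≤ ι.1) (hκ : 2 ≤ κ.1) :
    vPlusOne hd k ι (negIdx κ) = if ι = κ then 1 - cexp (I * kc k (idxOne d hd)) else 0 := by
  have hone : idxOne d hd ≠ κ := fun h => by
    have := congrArg Subtype.val h; simp only [idxOne] at this; omega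
  rw [vPlusOne_eq, Pi.sub_apply, Pi.smul_apply, Pi.smul_apply,
    uVec_apply_negIdx_of_pos k (by simp [idxOne]) (by omega),
    uVec_apply_negIdx_of_pos k (by omega) (by omega), if_neg hone]
  split_ifs <;> simp

lemma linearIndependent_vPlusOne (hd : 1 ≤ d) (k : Fin d → ℝ)
    (hk1 : cexp (I * kc k (idxOne d hd)) ≠ 1) :
    LinearIndependent ℂ (fun ι : {ι : Idx d // 2 ≤ ι.1} => vPlusOne hd k ι.1) := by
  rw [Fintype.linearIndependent_iff]
  intro g hg ι
  have h := congrFun hg (negIdx ι.1)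
  simp only [Finset.sum_apply, Pi.smul_apply, smul_eq_mul, Pi.zero_apply] at h
  rw [Finset.sum_congr rfl fun ι' _ => by rw [vPlusOne_apply_negIdx hd k ι'.2 ι.2]] at h
  simpa [← Subtype.ext_iff, sub_eq_zero, Ne.symm hk1] using h

end

/-- for `ι ∈ {2,…,d}`, `A[k]·v⃗^{(−ι)} = v⃗^{(−ι)}`; if `e^{ik_1} ≠ 1`
the vectors `v⃗^{(−2)},…,v⃗^{(−d)}` are linearly independent; and for every `k` the
eigenvalue `1` of `A[k]` has geometric multiplicity at least `d−1`. -/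
theorem nbw_eigenvalue_one (d : ℕ) (hd : 2 ≤ d) (k : Fin d → ℝ) :
    (∀ ι : Idx d, 2 ≤ ι.1 →
      matA k *ᵥ vPlusOne (by omega) k ι = vPlusOne (by omega) k ι) ∧
    (Complex.exp (Complex.I * (kc k (idxOne d (by omega)) : ℂ)) ≠ 1 →
      LinearIndependent ℂ (fun ι : {ι : Idx d // 2 ≤ ι.1} => vPlusOne (by omega) k ι.1)) ∧
    (d - 1 : ℕ) ≤ Module.finrank ℂ
      ↥(Module.End.eigenspace (Matrix.toLin' (matA k)) 1) := by
  exact ⟨fun ι _ => matA_mulVec_vPlusOne _ k ι, linearIndependent_vPlusOne _ k,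
    sub_one_le_finrank_eigenspace_one k⟩
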